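/- arXiv:1806.02770 — 6 statements merged into one kernel-verified Lean document; each statement's English description precedes it below -/
import Mathlib

section
/- Let G be a graph and G' be obtained from G by adding, for each vertex v of G, three new vertices v¹, v², v³ together with the edges vv¹, vv², vv³. Then for all positive integers k and t with k ≤ |V(G)|, G has a set of k vertices covering at least t edges if and only if G' has a set of k vertices covering at least t + 3k edges. -/
open Finset

variable {V : Type*}

noncomputable section

/-- The set of edges of `G` covered by the vertex set `S` (i.e. incident with some vertex of `S`). -/
def coveredEdges (G : SimpleGraph V) [Fintype V] [DecidableEq V] [DecidableRel G.Adj]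
    (S : Finset V) : Finset (Sym2 V) :=
  G.edgeFinset.filter (fun e => ∃ v ∈ S, v ∈ e)

/-- `τ` is a valid threshold assignment: `0 ≤ τ v ≤ deg v`. -/
def validThresholds (G : SimpleGraph V) [Fintype V] [DecidableRel G.Adj] (τ : V → ℕ) : Prop :=
  ∀ v, τ v ≤ G.degree v

/-- `M` is a `τ`-static monopoly: every vertex outside `M` has at least `τ v` neighbors in `M`. -/
def isMonopoly (G : SimpleGraph V) [Fintype V] [DecidableEq V] [DecidableRel G.Adj]
    (τ : V → ℕ) (M : Finset V) : Prop :=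
  ∀ v ∉ M, τ v ≤ (G.neighborFinset v ∩ M).card

/-- One activation step: add all vertices with at least `τ v` neighbors among active vertices. -/
def dynStep (G : SimpleGraph V) [Fintype V] [DecidableEq V] [DecidableRel G.Adj]
    (τ : V → ℕ) (A : Finset V) : Finset V :=
  A ∪ Finset.univ.filter (fun v => τ v ≤ (G.neighborFinset v ∩ A).card)

/-- `D` is a `τ`-dynamic monopoly: iterating activation from `D` reaches all vertices. -/
def isDynMonopoly (G : SimpleGraph V) [Fintype V] [DecidableEq V] [DecidableRel G.Adj]
    (τ : V → ℕ) (D : Finset V) : Prop :=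
  ∃ k, (dynStep G τ)^[k] D = Finset.univ

/-- `Pbeta G s`: minimum size of a vertex set covering at least `s` edges of `G`. -/
def Pbeta (G : SimpleGraph V) [Fintype V] [DecidableEq V] [DecidableRel G.Adj] (s : ℕ) : ℕ :=
  sInf {c | ∃ S : Finset V, S.card = c ∧ s ≤ (coveredEdges G S).card}

/-- `Smon G t`: minimum size of a `τ`-static monopoly over all valid `τ` with average at least `t`. -/
def Smon (G : SimpleGraph V) [Fintype V] [DecidableEq V] [DecidableRel G.Adj] (t : ℝ) : ℕ :=
  sInf {c | ∃ (τ : V → ℕ) (M : Finset V), validThresholds G τ ∧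
    (Fintype.card V : ℝ) * t ≤ ∑ v, (τ v : ℝ) ∧ isMonopoly G τ M ∧ M.card = c}

/-- `Sdyn G t`: minimum size of a `τ`-dynamic monopoly over all valid `τ` with average at least `t`. -/
def Sdyn (G : SimpleGraph V) [Fintype V] [DecidableEq V] [DecidableRel G.Adj] (t : ℝ) : ℕ :=
  sInf {c | ∃ (τ : V → ℕ) (D : Finset V), validThresholds G τ ∧
    (Fintype.card V : ℝ) * t ≤ ∑ v, (τ v : ℝ) ∧ isDynMonopoly G τ D ∧ D.card = c}

lemma coveredEdges_mono (G : SimpleGraph V) [Fintype V] [DecidableEq V] [DecidableRel G.Adj]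
    {S S' : Finset V} (h : S ⊆ S') : coveredEdges G S ⊆ coveredEdges G S' := by
  intro e he
  rw [coveredEdges, Finset.mem_filter] at he ⊢
  obtain ⟨h1, v, hv, hve⟩ := he
  exact ⟨h1, v, h hv, hve⟩

section Main

variable (G : SimpleGraph V) [Fintype V] [DecidableEq V] [DecidableRel G.Adj]
    (G' : SimpleGraph (V ⊕ V × Fin 3)) [DecidableRel G'.Adj]
    (hG' : ∀ a b, G'.Adj a b ↔
      ((∃ u v, a = Sum.inl u ∧ b = Sum.inl v ∧ G.Adj u v) ∨
       (∃ v i, a = Sum.inl v ∧ b = Sum.inr (v, i)) ∨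
       (∃ v i, a = Sum.inr (v, i) ∧ b = Sum.inl v)))

include hG'

lemma pendant_edge {e : Sym2 (V ⊕ V × Fin 3)} (he : e ∈ G'.edgeSet) {v : V} {i : Fin 3}
    (hv : Sum.inr (v, i) ∈ e) : e = s(Sum.inl v, Sum.inr (v, i)) := by
  induction e using Sym2.ind with
  | _ a b =>
    rw [SimpleGraph.mem_edgeSet, hG'] at he
    rw [Sym2.mem_iff] at hv
    rcases he with ⟨u, w, ha, hb, _⟩ | ⟨w, j, ha, hb⟩ | ⟨w, j, ha, hb⟩ <;>
      rcases hv with hv | hv <;> subst ha hb <;>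
      first
        | (simp only [Sum.inr.injEq, Prod.mk.injEq] at hv
           obtain ⟨rfl, rfl⟩ := hv
           first | rfl | exact Sym2.eq_swap)
        | (exact absurd hv (by simp))

lemma count_lemma (T : Finset V) :
    (coveredEdges G' (T.image Sum.inl)).card = (coveredEdges G T).card + 3 * T.card := by
  classical
  set A := (coveredEdges G T).image (Sym2.map (Sum.inl : V → V ⊕ V × Fin 3)) with hA
  set B := (T ×ˢ (Finset.univ : Finset (Fin 3))).image
      (fun p : V × Fin 3 => s(Sum.inl p.1, Sum.inr p)) with hB
  have hsplit : coveredEdges G' (T.image Sum.inl) = A ∪ B := by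
    ext e
    simp only [coveredEdges, Finset.mem_filter, SimpleGraph.mem_edgeFinset, Finset.mem_union]
    constructor
    · rintro ⟨he, w, hw, hwe⟩
      rw [Finset.mem_image] at hw
      obtain ⟨v, hvT, rfl⟩ := hw
      induction e using Sym2.ind with
      | _ a b =>
        have hadj : G'.Adj a b := he
        rw [hG'] at hadj
        rcases hadj with ⟨u, w, ha, hb, huw⟩ | ⟨w, j, ha, hb⟩ | ⟨w, j, ha, hb⟩
        · left
          subst ha hb
          rw [hA, Finset.mem_image]
          refine ⟨s(u, w), ?_, by simp⟩
          simp only [coveredEdges, Finset.mem_filter, SimpleGraph.mem_edgeFinset,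
            SimpleGraph.mem_edgeSet]
          refine ⟨huw, v, hvT, ?_⟩
          rw [Sym2.mem_iff] at hwe ⊢
          rcases hwe with h | h <;> [left; right] <;> exact Sum.inl_injective h
        · right
          subst ha hb
          have : v = w := by
            rw [Sym2.mem_iff] at hwe
            rcases hwe with h | h
            · exact Sum.inl_injective h
            · exact absurd h (by simp)
          subst this
          rw [hB, Finset.mem_image]
          exact ⟨(v, j), by simp [hvT], rfl⟩
        · right
          subst ha hb
          have : v = w := by
            rw [Sym2.mem_iff] at hwe
            rcases hwe with h | h
            · exact absurd h (by simp)
            · exact Sum.inl_injective h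
          subst this
          rw [hB, Finset.mem_image]
          exact ⟨(v, j), by simp [hvT], Sym2.eq_swap⟩
    · rintro (hmem | hmem)
      · rw [hA, Finset.mem_image] at hmem
        obtain ⟨f, hf, rfl⟩ := hmem
        simp only [coveredEdges, Finset.mem_filter, SimpleGraph.mem_edgeFinset,
          SimpleGraph.mem_edgeSet] at hf
        obtain ⟨hf1, v, hvT, hvf⟩ := hf
        induction f using Sym2.ind with
        | _ a b =>
          refine ⟨?_, Sum.inl v, Finset.mem_image_of_mem _ hvT, ?_⟩
          · rw [Sym2.map_pair_eq, SimpleGraph.mem_edgeSet, hG']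
            exact Or.inl ⟨a, b, rfl, rfl, hf1⟩
          · rw [Sym2.map_pair_eq, Sym2.mem_iff]
            rw [Sym2.mem_iff] at hvf
            rcases hvf with h | h <;> [left; right] <;> rw [h]
      · rw [hB, Finset.mem_image] at hmem
        obtain ⟨⟨v, i⟩, hp, rfl⟩ := hmem
        simp only [Finset.mem_product, Finset.mem_univ, and_true] at hp
        refine ⟨?_, Sum.inl v, Finset.mem_image_of_mem _ hp, by simp⟩
        rw [SimpleGraph.mem_edgeSet, hG']
        exact Or.inr (Or.inl ⟨v, i, rfl, rfl⟩)
  rw [hsplit, Finset.card_union_of_disjoint, hA, hB]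
  · rw [Finset.card_image_of_injective _ (Sym2.map.injective Sum.inl_injective),
      Finset.card_image_of_injective, Finset.card_product, Finset.card_univ, Fintype.card_fin,
      mul_comm]
    rintro ⟨a, i⟩ ⟨b, j⟩ h
    simp only [Sym2.eq, Sym2.rel_iff', Prod.mk.injEq, Prod.swap_prod_mk] at h
    rcases h with ⟨h1, h2⟩ | ⟨h1, h2⟩
    · rw [Sum.inr.injEq] at h2; exact h2
    · exact absurd h1 (by simp)
  · rw [Finset.disjoint_left]
    rintro e heA heB
    rw [hA, Finset.mem_image] at heA
    rw [hB, Finset.mem_image] at heB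
    obtain ⟨f, _, rfl⟩ := heA
    obtain ⟨⟨v, i⟩, _, he⟩ := heB
    have : Sum.inr (v, i) ∈ Sym2.map Sum.inl f := by rw [← he]; simp
    rw [Sym2.mem_map] at this
    obtain ⟨a, _, ha⟩ := this
    exact absurd ha (by simp)

lemma replace_lemma (S : Finset (V ⊕ V × Fin 3)) :
    coveredEdges G' S ⊆
      coveredEdges G' (S.image (Sum.elim Sum.inl (fun p => Sum.inl p.1))) := by
  intro e he
  simp only [coveredEdges, Finset.mem_filter, SimpleGraph.mem_edgeFinset] at he ⊢
  obtain ⟨he1, w, hwS, hwe⟩ := he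
  refine ⟨he1, ?_⟩
  rcases w with v | ⟨v, i⟩
  · exact ⟨Sum.inl v, Finset.mem_image_of_mem _ hwS, hwe⟩
  · refine ⟨Sum.inl v, Finset.mem_image_of_mem _ hwS, ?_⟩
    rw [pendant_edge G G' hG' he1 hwe]
    simp

end Main

theorem stmt0 (G : SimpleGraph V) [Fintype V] [DecidableEq V] [DecidableRel G.Adj]
    (G' : SimpleGraph (V ⊕ V × Fin 3)) [DecidableRel G'.Adj]
    (hG' : ∀ a b, G'.Adj a b ↔
      ((∃ u v, a = Sum.inl u ∧ b = Sum.inl v ∧ G.Adj u v) ∨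
       (∃ v i, a = Sum.inl v ∧ b = Sum.inr (v, i)) ∨
       (∃ v i, a = Sum.inr (v, i) ∧ b = Sum.inl v)))
    (k t : ℕ) (hk : 0 < k) (ht : 0 < t) (hkn : k ≤ Fintype.card V) :
    (∃ S : Finset V, S.card = k ∧ t ≤ (coveredEdges G S).card) ↔
    (∃ S : Finset (V ⊕ V × Fin 3), S.card = k ∧ t + 3 * k ≤ (coveredEdges G' S).card) := by
  constructor
  · rintro ⟨S, hScard, hScov⟩
    refine ⟨S.image Sum.inl, ?_, ?_⟩
    · rw [Finset.card_image_of_injective _ Sum.inl_injective, hScard]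
    · rw [count_lemma G G' hG' S, hScard]
      omega
  · rintro ⟨S, hScard, hScov⟩
    set A := S.image (Sum.elim Sum.inl (fun p => Sum.inl p.1) : V ⊕ V × Fin 3 → V ⊕ V × Fin 3) with hA
    set T0 := A.image (Sum.elim id Prod.fst : V ⊕ V × Fin 3 → V) with hT0
    have hAT0 : A ⊆ T0.image (Sum.inl : V → V ⊕ V × Fin 3) := by
      intro x hx
      rw [hA, Finset.mem_image] at hx
      obtain ⟨w, hwS, rfl⟩ := hx
      rcases w with v | ⟨v, i⟩ <;>
        · refine Finset.mem_image_of_mem _ ?_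
          rw [hT0]
          exact Finset.mem_image_of_mem _ (Finset.mem_image_of_mem _ hwS)
    have hT0card : T0.card ≤ k := by
      calc T0.card ≤ A.card := Finset.card_image_le
        _ ≤ S.card := Finset.card_image_le
        _ = k := hScard
    obtain ⟨T, hT0T, hTcard⟩ := Finset.exists_superset_card_eq hT0card hkn
    refine ⟨T, hTcard, ?_⟩
    have h1 : coveredEdges G' S ⊆ coveredEdges G' (T.image Sum.inl) := by
      refine (replace_lemma G G' hG' S).trans (coveredEdges_mono G' ?_)
      exact hAT0.trans (Finset.image_subset_image hT0T)
    have h2 := Finset.card_le_card h1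
    rw [count_lemma G G' hG' T, hTcard] at h2
    omega

end
end

section
/- Let G be a bipartite graph with bipartition (X, Y), where X = {x₁, …, x_p} with d(x₁) ≥ d(x₂) ≥ ⋯ ≥ d(x_p), and assume the minimum degree among vertices of X is at least the maximum degree among vertices of Y. Then for any positive integer t ≤ |E(G)|, the minimum size of a set of vertices covering at least t edges of G equals min{k : d(x₁) + ⋯ + d(x_k) ≥ t}. -/
open Finset

variable {V : Type*}

noncomputable section

/-! Since `X` is independent and meets every edge, the `k` vertices of `X` of largest degree
cover exactly `d(x₁) + ⋯ + d(x_k)` edges. Conversely, `c` vertices cover at most the sum of their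
degrees, and as every degree in `Y` is at most every degree in `X`, that sum is at most
`d(x₁) + ⋯ + d(x_c)`; once `c ≥ |X|` the bound is `|E(G)|` itself. -/

section Prefix

variable {ι M : Type*} [DecidableEq ι] {p : ℕ}

lemma exists_mem_le_of_card_eq_succ [Preorder M] (w : ι → M) (x : Fin p → ι)
    (hanti : Antitone fun i => w (x i)) (hout : ∀ v ∉ Set.range x, ∀ i, w v ≤ w (x i))
    (T : Finset ι) (i : Fin p) (hT : T.card = i + 1) : ∃ v ∈ T, w v ≤ w (x i) := by
  -- pigeonhole: `T` does not fit into `{x j | j < i}`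
  have hcard : ((Iio i).image x).card < T.card := by
    grw [card_image_le, Fin.card_Iio, hT]
    exact Nat.lt_succ_self i
  obtain ⟨v, hvT, hv⟩ := exists_mem_notMem_of_card_lt_card hcard
  refine ⟨v, hvT, ?_⟩
  by_cases hvx : v ∈ Set.range x
  · obtain ⟨j, rfl⟩ := hvx
    have hij : i ≤ j := not_lt.1 fun hji => hv (mem_image_of_mem x (mem_Iio.2 hji))
    exact hanti hij
  · exact hout v hvx i

lemma sum_le_sum_prefix_of_antitone [AddCommMonoid M] [PartialOrder M] [IsOrderedAddMonoid M]
    (w : ι → M) (x : Fin p → ι) (hanti : Antitone fun i => w (x i))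
    (hout : ∀ v ∉ Set.range x, ∀ i, w v ≤ w (x i)) (S : Finset ι) (hS : S.card ≤ p) :
    ∑ v ∈ S, w v ≤ ∑ i ∈ univ.filter (fun i : Fin p => (i : ℕ) < S.card), w (x i) := by
  induction h : S.card generalizing S with
  | zero => simp [card_eq_zero.1 h]
  | succ n ih =>
    have hn : n < p := by omega
    obtain ⟨v, hvS, hv⟩ :=
      exists_mem_le_of_card_eq_succ w x hanti hout S ⟨n, hn⟩ h
    have hprefix : univ.filter (fun i : Fin p => (i : ℕ) < n + 1)
        = insert ⟨n, hn⟩ (univ.filter (fun i : Fin p => (i : ℕ) < n)) := by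
      ext i
      simp only [mem_filter, mem_univ, true_and, mem_insert, Fin.ext_iff]
      omega
    rw [← add_sum_erase S w hvS, hprefix, sum_insert (by simp)]
    have herase : (S.erase v).card = n := by rw [card_erase_of_mem hvS, h]; rfl
    exact add_le_add hv (ih (S.erase v) (by omega) herase)

end Prefix

section Bipartite

variable {G : SimpleGraph V} {X Y : Set V}

lemma isIndepSet_of_bipartite (hdisj : Disjoint X Y)
    (hbip : ∀ u v, G.Adj u v → (u ∈ X ∧ v ∈ Y) ∨ (u ∈ Y ∧ v ∈ X)) : G.IsIndepSet X := by
  intro u hu v hv _ huv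
  rcases hbip u v huv with ⟨_, hvY⟩ | ⟨huY, _⟩
  · exact Set.disjoint_left.1 hdisj hv hvY
  · exact Set.disjoint_left.1 hdisj hu huY

lemma isVertexCover_of_bipartite
    (hbip : ∀ u v, G.Adj u v → (u ∈ X ∧ v ∈ Y) ∨ (u ∈ Y ∧ v ∈ X)) : G.IsVertexCover X := by
  intro u v huv
  rcases hbip u v huv with ⟨hu, _⟩ | ⟨_, hv⟩
  · exact .inl hu
  · exact .inr hv

end Bipartite

section Cover

variable [Fintype V] [DecidableEq V] {G : SimpleGraph V} [DecidableRel G.Adj]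

lemma coveredEdges_eq_biUnion (S : Finset V) :
    coveredEdges G S = S.biUnion fun v => G.incidenceFinset v := by
  ext e
  simp only [coveredEdges, mem_filter, mem_biUnion, SimpleGraph.mem_incidenceFinset,
    SimpleGraph.incidenceSet, Set.mem_ofPred_eq, SimpleGraph.mem_edgeFinset]
  tauto

lemma card_coveredEdges_le_sum_degree (S : Finset V) :
    (coveredEdges G S).card ≤ ∑ v ∈ S, G.degree v := by
  rw [coveredEdges_eq_biUnion]
  refine card_biUnion_le.trans_eq (sum_congr rfl fun v _ => ?_)
  exact G.card_incidenceFinset_eq_degree v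

lemma card_coveredEdges_eq_sum_degree {S : Finset V} (hS : G.IsIndepSet S) :
    (coveredEdges G S).card = ∑ v ∈ S, G.degree v := by
  rw [coveredEdges_eq_biUnion, card_biUnion]
  · exact sum_congr rfl fun v _ => G.card_incidenceFinset_eq_degree v
  · intro u hu v hv huv
    refine disjoint_left.2 fun e heu hev => ?_
    rw [SimpleGraph.mem_incidenceFinset] at heu hev
    have he : e = s(u, v) := (Sym2.mem_and_mem_iff huv).1 ⟨heu.2, hev.2⟩
    exact hS hu hv huv (G.mem_edgeSet.1 (he ▸ heu.1))

lemma coveredEdges_eq_edgeFinset {S : Finset V} (hS : G.IsVertexCover S) :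
    coveredEdges G S = G.edgeFinset := by
  refine filter_true_of_mem fun e he => ?_
  induction e with
  | h u v =>
    rcases hS (SimpleGraph.mem_edgeFinset.1 he) with hu | hv
    · exact ⟨u, hu, Sym2.mem_mk_left u v⟩
    · exact ⟨v, hv, Sym2.mem_mk_right u v⟩

variable {ι : Type*} {x : ι → V}

lemma card_coveredEdges_image (hinj : Function.Injective x) (hind : G.IsIndepSet (Set.range x))
    (s : Finset ι) : (coveredEdges G (s.image x)).card = ∑ i ∈ s, G.degree (x i) := by
  rw [card_coveredEdges_eq_sum_degree, sum_image hinj.injOn]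
  exact hind.mono (by simp)

lemma card_coveredEdges_le_sum_prefix {p : ℕ} {x : Fin p → V} (hinj : Function.Injective x)
    (hind : G.IsIndepSet (Set.range x)) (hcover : G.IsVertexCover (Set.range x))
    (hanti : Antitone fun i => G.degree (x i))
    (hout : ∀ v ∉ Set.range x, ∀ i, G.degree v ≤ G.degree (x i)) (S : Finset V) :
    (coveredEdges G S).card ≤
      ∑ i ∈ univ.filter (fun i : Fin p => (i : ℕ) < S.card), G.degree (x i) := by
  by_cases hS : S.card ≤ p
  · exact (card_coveredEdges_le_sum_degree S).trans
      (sum_le_sum_prefix_of_antitone (fun v => G.degree v) x hanti hout S hS)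
  · have hall : univ.filter (fun i : Fin p => (i : ℕ) < S.card) = univ :=
      filter_true_of_mem fun i _ => by omega
    have hcover' : G.IsVertexCover (univ.image x : Set V) := by simpa using hcover
    rw [hall, ← card_coveredEdges_image hinj hind, coveredEdges_eq_edgeFinset hcover']
    exact card_le_card (filter_subset _ _)

lemma Pbeta_eq_sInf_sum_prefix {p : ℕ} {x : Fin p → V} (hinj : Function.Injective x)
    (hind : G.IsIndepSet (Set.range x)) (hcover : G.IsVertexCover (Set.range x))
    (hanti : Antitone fun i => G.degree (x i))
    (hout : ∀ v ∉ Set.range x, ∀ i, G.degree v ≤ G.degree (x i))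
    {t : ℕ} (ht : t ≤ G.edgeFinset.card) :
    Pbeta G t =
      sInf {k : ℕ | t ≤ ∑ i ∈ univ.filter (fun i : Fin p => (i : ℕ) < k), G.degree (x i)} := by
  set P := {c | ∃ S : Finset V, S.card = c ∧ t ≤ (coveredEdges G S).card}
  set K := {k : ℕ | t ≤ ∑ i ∈ univ.filter (fun i : Fin p => (i : ℕ) < k), G.degree (x i)}
  change sInf P = sInf K
  have hmemK (S : Finset V) (hS : t ≤ (coveredEdges G S).card) : S.card ∈ K :=
    hS.trans (card_coveredEdges_le_sum_prefix hinj hind hcover hanti hout S)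
  have huniv : t ≤ (coveredEdges G univ).card := by
    rwa [coveredEdges_eq_edgeFinset (by simp)]
  apply le_antisymm
  · set k := sInf K
    set S := (univ.filter fun i : Fin p => (i : ℕ) < k).image x
    have hSk : S.card ≤ k :=
      card_image_le.trans (by rw [Fin.card_filter_val_lt]; exact min_le_right _ _)
    have hSt : t ≤ (coveredEdges G S).card := by
      rw [card_coveredEdges_image hinj hind]
      exact Nat.sInf_mem ⟨_, hmemK univ huniv⟩
    exact (Nat.sInf_le (s := P) ⟨S, rfl, hSt⟩).trans hSk
  · obtain ⟨S, hS, hSt⟩ := Nat.sInf_mem (s := P) ⟨_, univ, rfl, huniv⟩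
    exact Nat.sInf_le (hS ▸ hmemK S hSt)

end Cover

theorem stmt2_general (G : SimpleGraph V) [Fintype V] [DecidableEq V] [DecidableRel G.Adj]
    (X Y : Finset V) (hdisj : Disjoint X Y) (hunion : X ∪ Y = Finset.univ)
    (hbip : ∀ u v, G.Adj u v → (u ∈ X ∧ v ∈ Y) ∨ (u ∈ Y ∧ v ∈ X))
    (hdeg : ∀ x ∈ X, ∀ y ∈ Y, G.degree y ≤ G.degree x)
    (p : ℕ) (hp : p = X.card) (x : Fin p → V)
    (hinj : Function.Injective x) (hran : ∀ i, x i ∈ X)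
    (hmono : ∀ i j : Fin p, i ≤ j → G.degree (x j) ≤ G.degree (x i))
    (t : ℕ) (htm : t ≤ G.edgeFinset.card) :
    Pbeta G t =
      sInf {k : ℕ |
        t ≤ ∑ i ∈ Finset.univ.filter (fun i : Fin p => (i : ℕ) < k), G.degree (x i)} := by
  have hrange : Set.range x = X := by
    have himage : univ.image x = X :=
      eq_of_subset_of_card_le (by simpa [subset_iff] using hran)
        (by rw [card_image_of_injective _ hinj, card_univ, Fintype.card_fin, hp])
    rw [← himage, coe_image, coe_univ, Set.image_univ]
  have hout : ∀ v ∉ Set.range x, ∀ i, G.degree v ≤ G.degree (x i) := by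
    intro v hv i
    rw [hrange, mem_coe] at hv
    exact hdeg _ (hran i) v ((mem_union.1 (hunion ▸ mem_univ v)).resolve_left hv)
  refine Pbeta_eq_sInf_sum_prefix hinj ?_ ?_ hmono hout htm
  · rw [hrange]
    exact isIndepSet_of_bipartite (disjoint_coe.2 hdisj) hbip
  · rw [hrange]
    exact isVertexCover_of_bipartite hbip

theorem stmt2 (G : SimpleGraph V) [Fintype V] [DecidableEq V] [DecidableRel G.Adj]
    (X Y : Finset V) (hdisj : Disjoint X Y) (hunion : X ∪ Y = Finset.univ)
    (hbip : ∀ u v, G.Adj u v → (u ∈ X ∧ v ∈ Y) ∨ (u ∈ Y ∧ v ∈ X))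
    (hdeg : ∀ x ∈ X, ∀ y ∈ Y, G.degree y ≤ G.degree x)
    (p : ℕ) (hp : p = X.card) (x : Fin p → V)
    (hinj : Function.Injective x) (hran : ∀ i, x i ∈ X)
    (hmono : ∀ i j : Fin p, i ≤ j → G.degree (x j) ≤ G.degree (x i))
    (t : ℕ) (ht : 0 < t) (htm : t ≤ G.edgeFinset.card) :
    Pbeta G t =
      sInf {k : ℕ |
        t ≤ ∑ i ∈ Finset.univ.filter (fun i : Fin p => (i : ℕ) < k), G.degree (x i)} :=
  stmt2_general G X Y hdisj hunion hbip hdeg p hp x hinj hran hmono t htm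
end
end

section
/- Let G be a graph on n vertices and t a positive number. Then Smon_t(G) = Pβ_{⌈nt/2⌉}(G), i.e., the minimum size of a τ-static monopoly over all threshold assignments τ with average threshold at least t equals the minimum size of a vertex set covering at least nt/2 edges of G. -/
open Finset

variable {V : Type*}

noncomputable section

/-!
Every vertex set `S` determines a largest threshold assignment for which it is a static
monopoly: full degree on `S`, and the number of neighbours in `S` off `S`. This is exactly the
degree function of the spanning subgraph formed by the edges covered by `S`, so by the handshake
lemma its sum is twice the number of edges covered by `S`. Hence a static monopoly of size `c`
for thresholds of sum at least `n t` exists iff some `c`-set covers at least `n t / 2` edges.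
-/

namespace SimpleGraph

variable (G : SimpleGraph V)

def coverSubgraph (S : Finset V) : SimpleGraph V where
  Adj u v := G.Adj u v ∧ (u ∈ S ∨ v ∈ S)
  symm := ⟨fun _ _ ⟨h, hS⟩ => ⟨h.symm, hS.symm⟩⟩
  loopless := ⟨fun v ⟨h, _⟩ => G.loopless.irrefl v h⟩

@[simp]
lemma coverSubgraph_adj {S : Finset V} {u v : V} :
    (G.coverSubgraph S).Adj u v ↔ G.Adj u v ∧ (u ∈ S ∨ v ∈ S) :=
  Iff.rfl

instance [DecidableEq V] [DecidableRel G.Adj] (S : Finset V) :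
    DecidableRel (G.coverSubgraph S).Adj :=
  fun u v => inferInstanceAs (Decidable (G.Adj u v ∧ (u ∈ S ∨ v ∈ S)))

variable [Fintype V] [DecidableEq V] [DecidableRel G.Adj]

lemma edgeFinset_coverSubgraph (S : Finset V) :
    (G.coverSubgraph S).edgeFinset = coveredEdges G S := by
  ext e
  induction e with
  | h u v => simp [coveredEdges, and_or_left, exists_or]

lemma degree_coverSubgraph (S : Finset V) (v : V) :
    (G.coverSubgraph S).degree v =
      if v ∈ S then G.degree v else #(G.neighborFinset v ∩ S) := by
  rw [← card_neighborFinset_eq_degree, ← card_neighborFinset_eq_degree]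
  split_ifs with hv <;> congr 1 <;> ext u <;> simp [hv]

lemma sum_degree_coverSubgraph (S : Finset V) :
    ∑ v, (G.coverSubgraph S).degree v = 2 * #(coveredEdges G S) := by
  rw [sum_degrees_eq_twice_card_edges, edgeFinset_coverSubgraph]

lemma validThresholds_degree_coverSubgraph (S : Finset V) :
    validThresholds G fun v => (G.coverSubgraph S).degree v := fun v => by
  dsimp only
  rw [degree_coverSubgraph]
  split_ifs
  · rfl
  · exact (card_le_card inter_subset_left).trans_eq (card_neighborFinset_eq_degree G v)

lemma isMonopoly_degree_coverSubgraph (S : Finset V) :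
    isMonopoly G (fun v => (G.coverSubgraph S).degree v) S := fun v hv => by
  dsimp only
  rw [degree_coverSubgraph, if_neg hv]

end SimpleGraph

namespace isMonopoly

variable {G : SimpleGraph V} [Fintype V] [DecidableEq V] [DecidableRel G.Adj]
  {τ : V → ℕ} {M : Finset V}

lemma le_degree_coverSubgraph (hτ : validThresholds G τ) (hM : isMonopoly G τ M) (v : V) :
    τ v ≤ (G.coverSubgraph M).degree v := by
  rw [G.degree_coverSubgraph]
  split_ifs with hv
  · exact hτ v
  · exact hM v hv

lemma sum_le_two_mul_card_coveredEdges (hτ : validThresholds G τ) (hM : isMonopoly G τ M) :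
    ∑ v, τ v ≤ 2 * #(coveredEdges G M) :=
  G.sum_degree_coverSubgraph M ▸ sum_le_sum fun v _ => hM.le_degree_coverSubgraph hτ v

end isMonopoly

theorem stmt5_general (G : SimpleGraph V) [Fintype V] [DecidableEq V] [DecidableRel G.Adj]
    (t : ℝ) :
    Smon G t = Pbeta G ⌈(Fintype.card V : ℝ) * t / 2⌉₊ := by
  unfold Smon Pbeta
  congr 1
  ext c
  constructor
  · rintro ⟨τ, M, hτ, hsum, hM, rfl⟩
    refine ⟨M, rfl, Nat.ceil_le.mpr ?_⟩
    have hcov : ((∑ v, τ v : ℕ) : ℝ) ≤ (2 * #(coveredEdges G M) : ℕ) :=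
      Nat.cast_le.mpr (hM.sum_le_two_mul_card_coveredEdges hτ)
    push_cast at hcov
    linarith
  · rintro ⟨S, rfl, hS⟩
    refine ⟨fun v => (G.coverSubgraph S).degree v, S,
      G.validThresholds_degree_coverSubgraph S, ?_, G.isMonopoly_degree_coverSubgraph S, rfl⟩
    have hcov := Nat.ceil_le.mp hS
    rw [← Nat.cast_sum, G.sum_degree_coverSubgraph]
    push_cast
    linarith

theorem stmt5 (G : SimpleGraph V) [Fintype V] [DecidableEq V] [DecidableRel G.Adj]
    (t : ℝ) (ht : 0 < t) :
    Smon G t = Pbeta G ⌈(Fintype.card V : ℝ) * t / 2⌉₊ :=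
  stmt5_general G t

end
end

section
/- Let G be a graph, M ⊆ V(G), and τ a threshold assignment with ∑_{v} τ(v) ≥ nt such that M is a τ-static monopoly. Then M covers at least nt/2 edges of G, i.e., every static monopoly with average threshold at least t is an ⌈nt/2⌉-partial vertex cover. -/
open Finset

variable {V : Type*}

noncomputable section

theorem sum_tau_le_two_covered (G : SimpleGraph V) [Fintype V] [DecidableEq V]
    [DecidableRel G.Adj] (τ : V → ℕ) (M : Finset V)
    (hτ : validThresholds G τ) (hM : isMonopoly G τ M) :
    ∑ v, τ v ≤ 2 * (coveredEdges G M).card := by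
  have key : ∀ v, τ v ≤ ((coveredEdges G M).filter (fun e => v ∈ e)).card := by
    intro v
    by_cases hv : v ∈ M
    · calc τ v ≤ G.degree v := hτ v
        _ = (G.incidenceFinset v).card := (G.card_incidenceFinset_eq_degree v).symm
        _ ≤ _ := by
            apply Finset.card_le_card
            intro e he
            rw [SimpleGraph.mem_incidenceFinset] at he
            simp only [coveredEdges, Finset.mem_filter, SimpleGraph.mem_edgeFinset]
            exact ⟨⟨he.1, ⟨v, hv, he.2⟩⟩, he.2⟩
    · calc τ v ≤ (G.neighborFinset v ∩ M).card := hM v hv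
        _ = ((G.neighborFinset v ∩ M).image (fun u => s(v, u))).card := by
            rw [Finset.card_image_of_injective]
            intro a b hab
            rcases Sym2.eq_iff.mp hab with ⟨_, h⟩ | ⟨h1, h2⟩
            · exact h
            · exact h2.trans h1
        _ ≤ _ := by
            apply Finset.card_le_card
            intro e he
            simp only [Finset.mem_image, Finset.mem_inter, SimpleGraph.mem_neighborFinset] at he
            obtain ⟨u, ⟨hadj, huM⟩, rfl⟩ := he
            simp only [coveredEdges, Finset.mem_filter, SimpleGraph.mem_edgeFinset,
              SimpleGraph.mem_edgeSet]
            exact ⟨⟨hadj, ⟨u, huM, by simp⟩⟩, by simp⟩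
  calc ∑ v, τ v ≤ ∑ v, ((coveredEdges G M).filter (fun e => v ∈ e)).card :=
        Finset.sum_le_sum (fun v _ => key v)
    _ = ∑ e ∈ coveredEdges G M, (Finset.univ.filter (fun v => v ∈ e)).card := by
        simp only [Finset.card_filter]
        rw [Finset.sum_comm']
        simp
    _ = ∑ e ∈ coveredEdges G M, 2 := by
        apply Finset.sum_congr rfl
        intro e he
        have hne : ¬ e.IsDiag := by
          have : e ∈ G.edgeFinset := Finset.mem_filter.mp he |>.1
          rw [SimpleGraph.mem_edgeFinset] at this
          exact G.not_isDiag_of_mem_edgeSet this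
        induction e with
        | h a b =>
          rw [Sym2.isDiag_iff_proj_eq] at hne
          have : Finset.univ.filter (fun v => v ∈ s(a,b)) = {a, b} := by
            ext v; simp [Sym2.mem_iff]
          rw [this, Finset.card_insert_of_notMem (by simpa using hne), Finset.card_singleton]
    _ = 2 * (coveredEdges G M).card := by rw [Finset.sum_const, smul_eq_mul, mul_comm]

theorem stmt6 (G : SimpleGraph V) [Fintype V] [DecidableEq V] [DecidableRel G.Adj]
    (t : ℝ) (τ : V → ℕ) (M : Finset V)
    (hτ : validThresholds G τ)
    (havg : (Fintype.card V : ℝ) * t ≤ ∑ v, (τ v : ℝ))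
    (hM : isMonopoly G τ M) :
    (Fintype.card V : ℝ) * t / 2 ≤ ((coveredEdges G M).card : ℝ) := by
  have h := sum_tau_le_two_covered G τ M hτ hM
  have h2 : (∑ v, (τ v : ℝ)) ≤ 2 * ((coveredEdges G M).card : ℝ) := by
    exact_mod_cast h
  linarith
end
end

section
/- Let G be a graph on n vertices with m edges, and let t be a number such that nt is an integer with nt ≤ 2m. Then min over threshold assignments τ with average exactly t of dyn_τ(G) equals n − max{|V(H)| : H an induced subgraph of G with |E(H)| ≤ 2m − nt}. -/
/-!
A set `D` is a `τ`-dynamic monopoly iff the vertices can be ranked so that every `v ∉ D` has at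
least `τ v` lower-ranked neighbours. Given such a ranking, `∑ (deg v - τ v)` over `A = Dᶜ` counts
every edge inside `A` at least once, at its lower endpoint, so `e(A) ≤ 2m - ∑ τ`. Conversely, rank
`Aᶜ` first and `A` injectively after it, and let `τ v` be the number of lower-ranked neighbours on
`A` and `deg v` off `A`: then `Aᶜ` is a dynamic monopoly with `∑ τ = 2m - e(A)`, and lowering the
thresholds to total `s` keeps it one.
-/

open Finset

variable {V : Type*}

noncomputable section

theorem Finset.exists_le_sum_eq_of_le_sum {ι : Type*} (s : Finset ι) (f : ι → ℕ) {n : ℕ}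
    (hn : n ≤ ∑ i ∈ s, f i) : ∃ g ≤ f, ∑ i ∈ s, g i = n := by
  classical
  induction s using Finset.induction_on generalizing n with
  | empty => exact ⟨0, fun _ => Nat.zero_le _, by simpa [eq_comm] using hn⟩
  | insert a s ha ih =>
    rw [sum_insert ha] at hn
    obtain ⟨g, hgf, hg⟩ := ih (n := n - f a) (by omega)
    refine ⟨Function.update g a (min (f a) n), fun i => ?_, ?_⟩
    · rcases eq_or_ne i a with rfl | hi
      · simp
      · simpa [hi] using hgf i
    · rw [sum_insert ha, sum_update_of_notMem ha, Function.update_self, hg]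
      omega

section Monopolies

open SimpleGraph

variable {G : SimpleGraph V} [Fintype V] [DecidableRel G.Adj]

variable (G) in
def earlierNeighbors (t : V → ℕ) (v : V) : Finset V :=
  (G.neighborFinset v).filter (fun w => t w < t v)

theorem card_earlierNeighbors_add_card_filter_le (t : V → ℕ) (v : V) :
    #(earlierNeighbors G t v) + #((G.neighborFinset v).filter (fun w => t v ≤ t w)) =
      G.degree v := by
  rw [earlierNeighbors, ← card_neighborFinset_eq_degree]
  simpa only [not_lt] using
    card_filter_add_card_filter_not (s := G.neighborFinset v) (fun w => t w < t v)

variable [DecidableEq V]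

variable (G) in
def edgesWithin (A : Finset V) : Finset (Sym2 V) :=
  G.edgeFinset.filter (fun e => ∀ v ∈ e, v ∈ A)

theorem edgesWithin_empty : edgesWithin G ∅ = ∅ :=
  filter_eq_empty_iff.mpr fun e _ h => notMem_empty _ (h _ (Sym2.out_fst_mem e))

/-- The activation time serves as the rank. -/
theorem isDynMonopoly_iff_exists_rank {τ : V → ℕ} {D : Finset V} :
    isDynMonopoly G τ D ↔ ∃ t : V → ℕ, ∀ v ∉ D, τ v ≤ #(earlierNeighbors G t v) := by
  constructor
  · rintro ⟨k, hk⟩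
    have h_active (v : V) : ∃ i, v ∈ (dynStep G τ)^[i] D := ⟨k, hk ▸ mem_univ v⟩
    refine ⟨fun v => Nat.find (h_active v), fun v hv => ?_⟩
    obtain ⟨j, hj⟩ : ∃ j, Nat.find (h_active v) = j + 1 :=
      Nat.exists_eq_succ_of_ne_zero fun h0 => hv (by simpa [h0] using Nat.find_spec (h_active v))
    have h_step := Nat.find_spec (h_active v)
    rw [hj, Function.iterate_succ_apply'] at h_step
    have h_new : v ∉ (dynStep G τ)^[j] D := Nat.find_min (h_active v) (by omega)
    have h_count := (mem_union.mp h_step).resolve_left h_new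
    rw [mem_filter] at h_count
    refine h_count.2.trans (card_le_card fun w hw => ?_)
    rw [mem_inter] at hw
    rw [earlierNeighbors, mem_filter, hj]
    exact ⟨hw.1, Nat.lt_succ_of_le (Nat.find_min' _ hw.2)⟩
  · rintro ⟨t, ht⟩
    have h_reach (k : ℕ) (v : V) (hv : v ∈ D ∨ t v < k) : v ∈ (dynStep G τ)^[k] D := by
      induction k generalizing v with
      | zero => simpa using hv
      | succ k ih =>
        rw [Function.iterate_succ_apply']
        by_cases hv' : v ∈ D ∨ t v < k
        · exact subset_union_left (ih v hv')
        · push Not at hv'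
          have htv : t v = k := by
            rcases hv with hv | hv
            · exact absurd hv hv'.1
            · omega
          refine mem_union_right _ (mem_filter.mpr ⟨mem_univ v, ?_⟩)
          refine (ht v hv'.1).trans (card_le_card fun w hw => ?_)
          rw [earlierNeighbors, mem_filter] at hw
          exact mem_inter.mpr ⟨hw.1, ih w (Or.inr (by omega))⟩
    exact ⟨univ.sup t + 1, eq_univ_of_forall fun v =>
      h_reach _ v (Or.inr (Nat.lt_succ_of_le (le_sup (mem_univ v))))⟩

theorem isDynMonopoly.mono {τ τ' : V → ℕ} {D : Finset V} (hτ : τ' ≤ τ)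
    (hD : isDynMonopoly G τ D) : isDynMonopoly G τ' D := by
  obtain ⟨t, ht⟩ := isDynMonopoly_iff_exists_rank.mp hD
  exact isDynMonopoly_iff_exists_rank.mpr ⟨t, fun v hv => (hτ v).trans (ht v hv)⟩

section EdgeCount

variable {α : Type*} [LinearOrder α]

theorem card_edgesWithin_le_sum (A : Finset V) (t : V → α) :
    #(edgesWithin G A) ≤ ∑ v ∈ A, #((G.neighborFinset v ∩ A).filter (fun w => t v ≤ t w)) := by
  rw [← card_sigma]
  refine card_le_card_of_surjOn (fun p => s(p.1, p.2)) fun e he => ?_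
  induction e using Sym2.ind with
  | _ u w =>
    simp only [edgesWithin, coe_filter, Set.mem_ofPred_eq, mem_edgeFinset, mem_edgeSet,
      Sym2.mem_iff, forall_eq_or_imp, forall_eq] at he
    obtain ⟨huw, hu, hw⟩ := he
    rcases le_total (t u) (t w) with h | h
    · exact ⟨⟨u, w⟩, by simp [hu, hw, huw, h], rfl⟩
    · exact ⟨⟨w, u⟩, by simp [hu, hw, huw.symm, h], Sym2.eq_swap⟩

theorem sum_card_le_card_edgesWithin {A : Finset V} {t : V → α} (ht : Set.InjOn t A) :
    ∑ v ∈ A, #((G.neighborFinset v ∩ A).filter (fun w => t v ≤ t w)) ≤ #(edgesWithin G A) := by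
  rw [← card_sigma]
  refine card_le_card_of_injOn (fun p => s(p.1, p.2)) (fun p hp => ?_) ?_
  · simp only [coe_sigma, Set.mem_sigma_iff, mem_coe, coe_filter, Set.mem_ofPred_eq,
      mem_inter, mem_neighborFinset] at hp
    simp [edgesWithin, hp.1, hp.2.1.1, hp.2.1.2]
  · rintro ⟨a, b⟩ hab ⟨c, d⟩ hcd h
    simp only [coe_sigma, Set.mem_sigma_iff, mem_coe, coe_filter, Set.mem_ofPred_eq,
      mem_inter, mem_neighborFinset] at hab hcd
    rcases Sym2.eq_iff.mp h with ⟨rfl, rfl⟩ | ⟨rfl, rfl⟩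
    · rfl
    · exact absurd (ht hab.1 hab.2.1.2 (le_antisymm hab.2.2 hcd.2.2)) (G.ne_of_adj hab.2.1.1)

end EdgeCount

theorem sum_add_card_edgesWithin_le {τ : V → ℕ} (hτ : validThresholds G τ) {A : Finset V}
    {t : V → ℕ} (hA : ∀ v ∈ A, τ v ≤ #(earlierNeighbors G t v)) :
    ∑ v, τ v + #(edgesWithin G A) ≤ 2 * #G.edgeFinset := by
  have h_later (v : V) : #((G.neighborFinset v ∩ A).filter (fun w => t v ≤ t w)) ≤
      #((G.neighborFinset v).filter (fun w => t v ≤ t w)) :=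
    card_le_card (filter_subset_filter _ inter_subset_left)
  calc ∑ v, τ v + #(edgesWithin G A)
      ≤ ∑ v, τ v + ∑ v ∈ A, #((G.neighborFinset v ∩ A).filter (fun w => t v ≤ t w)) :=
        Nat.add_le_add_left (card_edgesWithin_le_sum A t) _
    _ = ∑ v ∈ A, (τ v + #((G.neighborFinset v ∩ A).filter (fun w => t v ≤ t w))) +
          ∑ v ∈ Aᶜ, τ v := by
        rw [← sum_add_sum_compl A τ, sum_add_distrib]; ring
    _ ≤ ∑ v ∈ A, G.degree v + ∑ v ∈ Aᶜ, G.degree v := by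
        refine add_le_add (sum_le_sum fun v hv => ?_) (sum_le_sum fun v _ => hτ v)
        rw [← card_earlierNeighbors_add_card_filter_le t v]
        exact add_le_add (hA v hv) (h_later v)
    _ = 2 * #G.edgeFinset := by
        rw [sum_add_sum_compl, sum_degrees_eq_twice_card_edges]

theorem exists_rank_injOn_of_compl_lt (A : Finset V) :
    ∃ t : V → ℕ, Set.InjOn t A ∧ ∀ v ∈ A, ∀ w ∉ A, t w < t v := by
  refine ⟨fun v => if v ∈ A then (Fintype.equivFin V v : ℕ) + 1 else 0, ?_, ?_⟩
  · intro a ha b hb h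
    simp only [mem_coe.mp ha, mem_coe.mp hb, if_true, add_left_inj, Fin.val_inj] at h
    exact (Fintype.equivFin V).injective h
  · intro v hv w hw
    simp [hv, hw]

/-- Every edge inside `A` costs exactly one unit of threshold, at its later endpoint. -/
theorem exists_isDynMonopoly_compl (A : Finset V) :
    ∃ τ : V → ℕ, validThresholds G τ ∧ 2 * #G.edgeFinset ≤ ∑ v, τ v + #(edgesWithin G A) ∧
      isDynMonopoly G τ Aᶜ := by
  obtain ⟨t, ht_inj, ht_lt⟩ := exists_rank_injOn_of_compl_lt A
  set τ : V → ℕ := fun v => if v ∈ A then #(earlierNeighbors G t v) else G.degree v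
  have hτ_mem (v : V) (hv : v ∈ A) : τ v = #(earlierNeighbors G t v) := if_pos hv
  have hτ_notMem (v : V) (hv : v ∉ A) : τ v = G.degree v := if_neg hv
  have h_later (v : V) (hv : v ∈ A) : (G.neighborFinset v).filter (fun w => t v ≤ t w) =
      (G.neighborFinset v ∩ A).filter (fun w => t v ≤ t w) := by
    ext w
    simp only [mem_filter, mem_inter]
    exact ⟨fun h => ⟨⟨h.1, by_contra fun hw => (ht_lt v hv w hw).not_ge h.2⟩, h.2⟩,
      fun h => ⟨h.1.1, h.2⟩⟩
  refine ⟨τ, fun v => ?_, ?_, isDynMonopoly_iff_exists_rank.mpr ⟨t, fun v hv => ?_⟩⟩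
  · by_cases hv : v ∈ A
    · exact hτ_mem v hv ▸ card_le_card (filter_subset _ (G.neighborFinset v))
    · exact (hτ_notMem v hv).le
  · calc 2 * #G.edgeFinset
        = ∑ v ∈ A, G.degree v + ∑ v ∈ Aᶜ, G.degree v := by
          rw [sum_add_sum_compl, sum_degrees_eq_twice_card_edges]
      _ = ∑ v ∈ A, τ v + ∑ v ∈ A, #((G.neighborFinset v ∩ A).filter (fun w => t v ≤ t w)) +
            ∑ v ∈ Aᶜ, τ v := by
          rw [← sum_add_distrib]
          congr 1
          · refine sum_congr rfl fun v hv => ?_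
            rw [← card_earlierNeighbors_add_card_filter_le t v, h_later v hv, hτ_mem v hv]
          · exact sum_congr rfl fun v hv => (hτ_notMem v (mem_compl.mp hv)).symm
      _ ≤ ∑ v, τ v + #(edgesWithin G A) := by
          rw [← sum_add_sum_compl A τ]
          linarith [sum_card_le_card_edgesWithin (G := G) ht_inj]
  · exact (hτ_mem v (by simpa using hv)).le

theorem isDynMonopoly.card_edgesWithin_compl_le {τ : V → ℕ} {D : Finset V}
    (hτ : validThresholds G τ) (hD : isDynMonopoly G τ D) :
    #(edgesWithin G Dᶜ) ≤ 2 * #G.edgeFinset - ∑ v, τ v := by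
  obtain ⟨t, ht⟩ := isDynMonopoly_iff_exists_rank.mp hD
  have := sum_add_card_edgesWithin_le hτ (A := Dᶜ) fun v hv => ht v (mem_compl.mp hv)
  omega

theorem exists_isDynMonopoly_compl_of_card_edgesWithin_le {s : ℕ} (hs : s ≤ 2 * #G.edgeFinset)
    {A : Finset V} (hA : #(edgesWithin G A) ≤ 2 * #G.edgeFinset - s) :
    ∃ τ : V → ℕ, validThresholds G τ ∧ ∑ v, τ v = s ∧ isDynMonopoly G τ Aᶜ := by
  obtain ⟨τ₀, hτ₀, h_sum, h_dyn⟩ := exists_isDynMonopoly_compl (G := G) A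
  obtain ⟨τ, hτ, h_eq⟩ := univ.exists_le_sum_eq_of_le_sum τ₀ (n := s) (by omega)
  exact ⟨τ, fun v => (hτ v).trans (hτ₀ v), h_eq, h_dyn.mono hτ⟩

end Monopolies

theorem stmt7 (G : SimpleGraph V) [Fintype V] [DecidableEq V] [DecidableRel G.Adj]
    (s : ℕ) (hs : s ≤ 2 * G.edgeFinset.card) :
    sInf {c | ∃ (τ : V → ℕ) (D : Finset V), validThresholds G τ ∧
        (∑ v, τ v) = s ∧ isDynMonopoly G τ D ∧ D.card = c}
      = Fintype.card V - sSup {c | ∃ A : Finset V, A.card = c ∧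
          (G.edgeFinset.filter (fun e => ∀ v ∈ e, v ∈ A)).card
            ≤ 2 * G.edgeFinset.card - s} := by
  change _ = _ - sSup {c | ∃ A : Finset V, #A = c ∧ #(edgesWithin G A) ≤ 2 * #G.edgeFinset - s}
  set T := {c | ∃ A : Finset V, #A = c ∧ #(edgesWithin G A) ≤ 2 * #G.edgeFinset - s}
  have hT : BddAbove T := ⟨Fintype.card V, by rintro _ ⟨A, rfl, -⟩; exact card_le_univ A⟩
  obtain ⟨A, hA_card, hA⟩ : sSup T ∈ T :=
    Nat.sSup_mem ⟨0, ∅, card_empty, by simp [edgesWithin_empty]⟩ hT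
  obtain ⟨τ, hτ, h_sum, h_dyn⟩ := exists_isDynMonopoly_compl_of_card_edgesWithin_le hs hA
  have h_opt : Fintype.card V - sSup T ∈ {c | ∃ (τ : V → ℕ) (D : Finset V),
      validThresholds G τ ∧ (∑ v, τ v) = s ∧ isDynMonopoly G τ D ∧ D.card = c} :=
    ⟨τ, Aᶜ, hτ, h_sum, h_dyn, by rw [card_compl, hA_card]⟩
  refine le_antisymm (Nat.sInf_le h_opt) (le_csInf ⟨_, h_opt⟩ ?_)
  rintro _ ⟨τ', D, hτ', h_sum', hD, rfl⟩
  have h_le : Fintype.card V - #D ≤ sSup T :=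
    le_csSup hT ⟨Dᶜ, card_compl D, h_sum' ▸ hD.card_edgesWithin_compl_le hτ'⟩
  have := card_le_univ D
  omega
end
end

section
/- Let G be a graph with edge density ε(G) = m/n, and let t be a positive number with t ≤ ε(G). Then Sdyn_t(G) = 0; that is, there is a threshold assignment τ with average threshold at least t for which the empty set is a τ-dynamic monopoly. -/
open Finset

variable {V : Type*}

noncomputable section

lemma aux_sum_earlier (G : SimpleGraph V) [Fintype V] [DecidableEq V] [DecidableRel G.Adj]
    (e : V ≃ Fin (Fintype.card V)) :
    ∑ v, ((G.neighborFinset v).filter (fun u => e u < e v)).card = G.edgeFinset.card := by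
  classical
  have hsymm : ∀ a b : V, (if e a < e b then b else a) = (if e b < e a then a else b) := by
    intro a b
    rcases lt_trichotomy (e a) (e b) with h | h | h
    · rw [if_pos h, if_neg (asymm h)]
    · have : a = b := e.injective h
      simp [this]
    · rw [if_neg (asymm h), if_pos h]
  let f : Sym2 V → V := Sym2.lift ⟨fun a b => if e a < e b then b else a, hsymm⟩
  have hfib : G.edgeFinset.card
      = ∑ v, (G.edgeFinset.filter (fun s => f s = v)).card :=
    Finset.card_eq_sum_card_fiberwise (fun s _ => Finset.mem_univ (f s))
  rw [hfib]
  refine Finset.sum_congr rfl fun v _ => ?_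
  refine Finset.card_bij (fun u _ => s(u, v)) ?_ ?_ ?_
  · intro u hu
    simp only [Finset.mem_filter, SimpleGraph.mem_neighborFinset] at hu
    simp only [Finset.mem_filter, SimpleGraph.mem_edgeFinset, SimpleGraph.mem_edgeSet]
    refine ⟨hu.1.symm, ?_⟩
    show (if e u < e v then v else u) = v
    rw [if_pos hu.2]
  · intro u hu u' hu' h
    simp only [Finset.mem_filter, SimpleGraph.mem_neighborFinset] at hu hu'
    rcases Sym2.eq_iff.mp h with ⟨h1, _⟩ | ⟨h1, h2⟩
    · exact h1
    · exact absurd h1 hu.1.ne'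
  · intro s hs
    simp only [Finset.mem_filter, SimpleGraph.mem_edgeFinset, SimpleGraph.mem_edgeSet] at hs
    induction s with
    | _ a b =>
      obtain ⟨hadj, hmax⟩ := hs
      rw [SimpleGraph.mem_edgeSet] at hadj
      have hmax' : (if e a < e b then b else a) = v := hmax
      by_cases h : e a < e b
      · rw [if_pos h] at hmax'
        subst hmax'
        exact ⟨a, by simp [SimpleGraph.mem_neighborFinset, hadj.symm, h], rfl⟩
      · rw [if_neg h] at hmax'
        subst hmax'
        have hne : e b ≠ e a := fun hh => G.ne_of_adj hadj (e.injective hh.symm)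
        have hlt : e b < e a := lt_of_le_of_ne (not_lt.mp h) hne
        exact ⟨b, by simp [SimpleGraph.mem_neighborFinset, hadj, hlt], Sym2.eq_swap⟩

theorem stmt10 (G : SimpleGraph V) [Fintype V] [DecidableEq V] [DecidableRel G.Adj]
    (t : ℝ) (ht : 0 < t) (hn : 0 < Fintype.card V)
    (hte : t ≤ (G.edgeFinset.card : ℝ) / (Fintype.card V : ℝ)) :
    Sdyn G t = 0 ∧ ∃ τ : V → ℕ, validThresholds G τ ∧
      (Fintype.card V : ℝ) * t ≤ ∑ v, (τ v : ℝ) ∧ isDynMonopoly G τ ∅ := by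
  classical
  set n := Fintype.card V with hn'
  let e : V ≃ Fin n := Fintype.equivFin V
  set τ : V → ℕ := fun v => ((G.neighborFinset v).filter (fun u => e u < e v)).card with hτ
  have hvalid : validThresholds G τ := by
    intro v
    exact Finset.card_filter_le _ _
  have hsum : ∑ v, τ v = G.edgeFinset.card := aux_sum_earlier G e
  have hle : (Fintype.card V : ℝ) * t ≤ ∑ v, (τ v : ℝ) := by
    have hc : (0:ℝ) < (Fintype.card V : ℝ) := by exact_mod_cast hn
    have h1 : (Fintype.card V : ℝ) * t ≤ (G.edgeFinset.card : ℝ) := by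
      calc (Fintype.card V : ℝ) * t
          ≤ (Fintype.card V : ℝ) * ((G.edgeFinset.card : ℝ) / (Fintype.card V : ℝ)) :=
            mul_le_mul_of_nonneg_left hte hc.le
        _ = (G.edgeFinset.card : ℝ) := by field_simp
    calc (Fintype.card V : ℝ) * t ≤ (G.edgeFinset.card : ℝ) := h1
      _ = ∑ v, (τ v : ℝ) := by rw [← hsum]; push_cast; ring
  have hstep : ∀ k : ℕ, ∀ v : V, (e v : ℕ) < k → v ∈ (dynStep G τ)^[k] (∅ : Finset V) := by
    intro k
    induction k with
    | zero => intro v hv; omega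
    | succ k ih =>
      intro v hv
      rw [Function.iterate_succ_apply']
      simp only [dynStep]
      simp only [Finset.mem_union, Finset.mem_filter, Finset.mem_univ, true_and]
      right
      refine le_trans (le_refl (τ v)) (Finset.card_le_card ?_)
      intro u hu
      simp only [Finset.mem_filter] at hu
      refine Finset.mem_inter.mpr ⟨hu.1, ih u ?_⟩
      have : (e u : ℕ) < (e v : ℕ) := hu.2
      omega
  have hdyn : isDynMonopoly G τ ∅ := by
    refine ⟨n, ?_⟩
    apply Finset.eq_univ_of_forall
    intro v
    exact hstep n v (e v).isLt
  refine ⟨?_, τ, hvalid, hle, hdyn⟩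
  exact Nat.sInf_eq_zero.mpr (Or.inl ⟨τ, ∅, hvalid, hle, hdyn, Finset.card_empty⟩)
end
end
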